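/- The jointly-measurable incompatibility robustness equals the maximal consistent-LHS steering robustness within the SEO class: for every measurement assemblage {B_{a|x}} and every full-rank density matrix ρ, SR^{C-LHS}(ρ^{1/2} B ρ^{1/2}) = IR^{JM}(B). Hence max over density matrices ρ of SR^{C-LHS}(ρ^{1/2} B ρ^{1/2}) equals IR^{JM}(B). -/

import Mathlib

open Matrix Kronecker BigOperators ComplexOrder

noncomputable section

/-- A density matrix: positive semidefinite with unit trace. -/
def IsDensity {d : ℕ} (ρ : Matrix (Fin d) (Fin d) ℂ) : Prop :=
  ρ.PosSemidef ∧ ρ.trace = 1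

/-- A POVM: positive semidefinite effects summing to the identity. -/
def IsPOVM {d nl : ℕ} (G : Fin nl → Matrix (Fin d) (Fin d) ℂ) : Prop :=
  (∀ l, (G l).PosSemidef) ∧ ∑ l, G l = 1

/-- A measurement assemblage: for each setting `x`, a POVM `a ↦ M x a`. -/
def IsMA {d na nx : ℕ} (M : Fin nx → Fin na → Matrix (Fin d) (Fin d) ℂ) : Prop :=
  (∀ x a, (M x a).PosSemidef) ∧ ∀ x, ∑ a, M x a = 1

/-- Joint measurability: `M x a = ∑ λ p(a|x,λ) G λ` for a parent POVM `G`. -/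
def JM {d na nx : ℕ} (M : Fin nx → Fin na → Matrix (Fin d) (Fin d) ℂ) : Prop :=
  ∃ (nl : ℕ) (G : Fin nl → Matrix (Fin d) (Fin d) ℂ)
    (p : Fin nx → Fin na → Fin nl → ℝ),
    IsPOVM G ∧ (∀ x a l, 0 ≤ p x a l) ∧ (∀ x l, ∑ a, p x a l = 1) ∧
    ∀ x a, M x a = ∑ l, (p x a l : ℂ) • G l

/-- A state assemblage: PSD elements with an `x`-independent reduced density matrix. -/
def IsSA {d na nx : ℕ} (σ : Fin nx → Fin na → Matrix (Fin d) (Fin d) ℂ) : Prop :=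
  (∀ x a, (σ x a).PosSemidef) ∧
  ∃ ρ : Matrix (Fin d) (Fin d) ℂ, IsDensity ρ ∧ ∀ x, ∑ a, σ x a = ρ

/-- Local-hidden-state model: `σ x a = ∑ λ q(λ) p(a|x,λ) ρ_λ`. -/
def LHS {d na nx : ℕ} (σ : Fin nx → Fin na → Matrix (Fin d) (Fin d) ℂ) : Prop :=
  ∃ (nl : ℕ) (q : Fin nl → ℝ) (p : Fin nx → Fin na → Fin nl → ℝ)
    (ρ : Fin nl → Matrix (Fin d) (Fin d) ℂ),
    (∀ l, 0 ≤ q l) ∧ (∑ l, q l = 1) ∧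
    (∀ x a l, 0 ≤ p x a l) ∧ (∀ x l, ∑ a, p x a l = 1) ∧
    (∀ l, IsDensity (ρ l)) ∧
    ∀ x a, σ x a = ∑ l, ((q l * p x a l : ℝ) : ℂ) • ρ l

/-- Incompatibility robustness. -/
def IR {d na nx : ℕ} (B : Fin nx → Fin na → Matrix (Fin d) (Fin d) ℂ) : ℝ :=
  sInf {t : ℝ | 0 ≤ t ∧ ∃ N, IsMA N ∧
    JM (fun x a => (((1 + t : ℝ))⁻¹ : ℂ) • (B x a + (t : ℂ) • N x a))}

/-- Steering robustness. -/
def SR {d na nx : ℕ} (σ : Fin nx → Fin na → Matrix (Fin d) (Fin d) ℂ) : ℝ :=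
  sInf {t : ℝ | 0 ≤ t ∧ ∃ ξ, IsSA ξ ∧
    LHS (fun x a => (((1 + t : ℝ))⁻¹ : ℂ) • (σ x a + (t : ℂ) • ξ x a))}

/-- Incompatible weight. -/
def IW {d na nx : ℕ} (B : Fin nx → Fin na → Matrix (Fin d) (Fin d) ℂ) : ℝ :=
  sInf {t : ℝ | 0 ≤ t ∧ t ≤ 1 ∧ ∃ N O, IsMA N ∧ JM O ∧
    ∀ x a, B x a = (t : ℂ) • N x a + ((1 - t : ℝ) : ℂ) • O x a}

/-- Steerable weight. -/
def SW {d na nx : ℕ} (σ : Fin nx → Fin na → Matrix (Fin d) (Fin d) ℂ) : ℝ :=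
  sInf {t : ℝ | 0 ≤ t ∧ t ≤ 1 ∧ ∃ ξ τ, IsSA ξ ∧ LHS τ ∧
    ∀ x a, σ x a = (t : ℂ) • ξ x a + ((1 - t : ℝ) : ℂ) • τ x a}

/-- Positive map on matrices. -/
def PosMap {d : ℕ} (E : Matrix (Fin d) (Fin d) ℂ →ₗ[ℂ] Matrix (Fin d) (Fin d) ℂ) : Prop :=
  ∀ X, X.PosSemidef → (E X).PosSemidef

/-- Trace-nonincreasing on PSD matrices. -/
def TNI {d : ℕ} (E : Matrix (Fin d) (Fin d) ℂ →ₗ[ℂ] Matrix (Fin d) (Fin d) ℂ) : Prop :=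
  ∀ X : Matrix (Fin d) (Fin d) ℂ, X.PosSemidef → (E X).trace.re ≤ X.trace.re

/-- `Ed` is the Hilbert–Schmidt adjoint of `E`. -/
def IsAdjoint {d : ℕ} (E Ed : Matrix (Fin d) (Fin d) ℂ →ₗ[ℂ] Matrix (Fin d) (Fin d) ℂ) : Prop :=
  ∀ X Y, ((E X)ᴴ * Y).trace = (Xᴴ * (Ed Y)).trace

/-- Partial trace over the first tensor factor. -/
def ptraceA {d d' : ℕ} (M : Matrix (Fin d × Fin d') (Fin d × Fin d') ℂ) :
    Matrix (Fin d') (Fin d') ℂ :=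
  Matrix.of fun i j => ∑ k : Fin d, M (k, i) (k, j)

/-- The map `E ⊗ id` acting on bipartite matrices. -/
def tensId {d d' : ℕ} (E : Matrix (Fin d) (Fin d) ℂ →ₗ[ℂ] Matrix (Fin d) (Fin d) ℂ)
    (M : Matrix (Fin d × Fin d') (Fin d × Fin d') ℂ) :
    Matrix (Fin d × Fin d') (Fin d × Fin d') ℂ :=
  Matrix.of fun p q => E (Matrix.of fun i k => M (i, p.2) (k, q.2)) p.1 q.1

/-- The square root of a positive semidefinite matrix (removed from Mathlib; old definition). -/
def Matrix.PosSemidef.sqrt {n : Type*} [Fintype n] [DecidableEq n] {A : Matrix n n ℂ}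
    (hA : A.PosSemidef) : Matrix n n ℂ :=
  hA.1.eigenvectorUnitary.1 * diagonal ((↑) ∘ (√·) ∘ hA.1.eigenvalues) *
    (star hA.1.eigenvectorUnitary : Matrix n n ℂ)

/-- JM incompatibility robustness: the noise assemblage is itself jointly measurable. -/
def IRJM {d na nx : ℕ} (B : Fin nx → Fin na → Matrix (Fin d) (Fin d) ℂ) : ℝ :=
  sInf {t : ℝ | 0 ≤ t ∧ ∃ N, IsMA N ∧ JM N ∧
    JM (fun x a => (((1 + t : ℝ))⁻¹ : ℂ) • (B x a + (t : ℂ) • N x a))}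

/-- Consistent LHS steering robustness: the noise assemblage is LHS with the same
reduced state as `σ`. -/
def SRCLHS {d na nx : ℕ} (σ : Fin nx → Fin na → Matrix (Fin d) (Fin d) ℂ) : ℝ :=
  sInf {t : ℝ | 0 ≤ t ∧ ∃ ξ, IsSA ξ ∧ LHS ξ ∧ (∀ x, ∑ a, ξ x a = ∑ a, σ x a) ∧
    LHS (fun x a => (((1 + t : ℝ))⁻¹ : ℂ) • (σ x a + (t : ℂ) • ξ x a))}

/-! Conjugating by `ρ^{1/2}` turns a jointly measurable assemblage `∑ λ, p(a|x,λ) • G λ` into an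
LHS assemblage whose hidden states are the normalised `ρ^{1/2} G λ ρ^{1/2}`, weighted by their
traces; conversely, conjugating by `ρ^{-1/2}` turns an LHS assemblage with reduced state `ρ` into a
jointly measurable one, the weighted hidden states forming the parent POVM. Conjugation commutes
with taking the noisy mixture `(B + t N) / (1 + t)`, so for invertible `ρ` the two robustness
problems have the same feasible set. For singular `σ` only the first direction survives; it gives
`SR^{C-LHS} ≤ IR^{JM}` because the `IR^{JM}` problem is feasible (otherwise its `sInf` would be the
junk value `0`): mixing with uniform noise at weight `nx - 1` is jointly measurable. Hence the
supremum is attained at `ρ`. -/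

namespace Matrix.PosSemidef

variable {n : Type*} [Fintype n] {A : Matrix n n ℂ}

theorem ofReal_re_trace (hA : A.PosSemidef) : ((A.trace.re : ℝ) : ℂ) = A.trace :=
  (Complex.eq_re_of_ofReal_le (r := 0) (by simpa using hA.trace_nonneg)).symm

theorem re_trace_nonneg (hA : A.PosSemidef) : 0 ≤ A.trace.re :=
  Complex.zero_le_real.mp (hA.ofReal_re_trace ▸ hA.trace_nonneg)

variable [DecidableEq n]

theorem posSemidef_sqrt (hA : A.PosSemidef) : hA.sqrt.PosSemidef := by
  have hD : (diagonal ((↑) ∘ (√·) ∘ hA.1.eigenvalues) : Matrix n n ℂ).PosSemidef :=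
    posSemidef_diagonal_iff.mpr fun i => by simp [Real.sqrt_nonneg]
  simpa [Matrix.PosSemidef.sqrt, star_eq_conjTranspose] using
    hD.mul_mul_conjTranspose_same (hA.1.eigenvectorUnitary : Matrix n n ℂ)

theorem sqrt_mul_self (hA : A.PosSemidef) : hA.sqrt * hA.sqrt = A := by
  set U : Matrix n n ℂ := (hA.1.eigenvectorUnitary : Matrix n n ℂ)
  have hU : star U * U = 1 := Unitary.star_mul_self_of_mem hA.1.eigenvectorUnitary.2
  have hsq : diagonal ((↑) ∘ (√·) ∘ hA.1.eigenvalues) *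
      diagonal ((↑) ∘ (√·) ∘ hA.1.eigenvalues) =
      (diagonal (RCLike.ofReal ∘ hA.1.eigenvalues) : Matrix n n ℂ) := by
    rw [diagonal_mul_diagonal]
    congr 1
    funext i
    simp only [Function.comp_apply, ← Complex.ofReal_mul,
      Real.mul_self_sqrt (hA.eigenvalues_nonneg i)]
    rfl
  conv_rhs => rw [hA.1.spectral_theorem, Unitary.conjStarAlgAut_apply]
  calc hA.sqrt * hA.sqrt
      = U * (diagonal ((↑) ∘ (√·) ∘ hA.1.eigenvalues) * (star U * U) *
          diagonal ((↑) ∘ (√·) ∘ hA.1.eigenvalues)) * star U := by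
        simp only [Matrix.PosSemidef.sqrt, U, Matrix.mul_assoc]
    _ = _ := by rw [hU, Matrix.mul_one, hsq]

theorem sqrt_mul_conjTranspose_sqrt (hA : A.PosSemidef) : hA.sqrt * hA.sqrtᴴ = A := by
  rw [hA.posSemidef_sqrt.1.eq, hA.sqrt_mul_self]

end Matrix.PosSemidef

theorem Matrix.PosDef.isUnit_sqrt {n : Type*} [Fintype n] [DecidableEq n] {A : Matrix n n ℂ}
    (hA : A.PosDef) : IsUnit hA.posSemidef.sqrt :=
  isUnit_of_mul_isUnit_left (hA.posSemidef.sqrt_mul_self ▸ hA.isUnit)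

variable {d na nx : ℕ}

theorem isDensity_smul_one (hd : d ≠ 0) :
    IsDensity ((((d : ℝ)⁻¹ : ℝ) : ℂ) • (1 : Matrix (Fin d) (Fin d) ℂ)) := by
  refine ⟨PosSemidef.one.smul (Complex.zero_le_real.mpr (by positivity)), ?_⟩
  rw [trace_smul, trace_one, Fintype.card_fin, smul_eq_mul]
  push_cast
  exact inv_mul_cancel₀ (Nat.cast_ne_zero.mpr hd)

theorem Matrix.PosSemidef.exists_isDensity_smul_eq {P : Matrix (Fin d) (Fin d) ℂ}
    (hP : P.PosSemidef) (hd : d ≠ 0) :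
    ∃ ρ, IsDensity ρ ∧ P = ((P.trace.re : ℝ) : ℂ) • ρ := by
  have hr := hP.ofReal_re_trace
  set r := P.trace.re
  by_cases htr : r = 0
  · refine ⟨_, isDensity_smul_one hd, ?_⟩
    rw [htr, Complex.ofReal_zero, zero_smul, ← hP.trace_eq_zero_iff, ← hr, htr,
      Complex.ofReal_zero]
  · refine ⟨((r⁻¹ : ℝ) : ℂ) • P,
      ⟨hP.smul (Complex.zero_le_real.mpr (inv_nonneg.mpr hP.re_trace_nonneg)), ?_⟩, ?_⟩
    · rw [trace_smul, ← hr, smul_eq_mul, ← Complex.ofReal_mul, inv_mul_cancel₀ htr,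
        Complex.ofReal_one]
    · rw [smul_smul, ← Complex.ofReal_mul, mul_inv_cancel₀ htr, Complex.ofReal_one, one_smul]

theorem LHS.of_sum_smul {nl : ℕ} {P : Fin nl → Matrix (Fin d) (Fin d) ℂ}
    (hP : ∀ l, (P l).PosSemidef) (htr : ∑ l, (P l).trace = 1)
    {p : Fin nx → Fin na → Fin nl → ℝ} (hp0 : ∀ x a l, 0 ≤ p x a l)
    (hp1 : ∀ x l, ∑ a, p x a l = 1) :
    LHS (fun x a => ∑ l, (p x a l : ℂ) • P l) := by
  have hd : d ≠ 0 := by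
    rintro rfl
    simp [Matrix.trace] at htr
  choose ρ hρ hPρ using fun l => (hP l).exists_isDensity_smul_eq hd
  refine ⟨nl, fun l => (P l).trace.re, p, ρ, fun l => (hP l).re_trace_nonneg, ?_, hp0, hp1,
    hρ, fun x a => Finset.sum_congr rfl fun l _ => ?_⟩
  · rw [← Complex.re_sum, htr, Complex.one_re]
  · rw [hPρ l, smul_smul, ← Complex.ofReal_mul, mul_comm]

theorem JM.of_fintype {ι : Type*} [Fintype ι] {G : ι → Matrix (Fin d) (Fin d) ℂ}
    (hG : ∀ i, (G i).PosSemidef) (hGsum : ∑ i, G i = 1) {p : Fin nx → Fin na → ι → ℝ}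
    (hp0 : ∀ x a i, 0 ≤ p x a i) (hp1 : ∀ x i, ∑ a, p x a i = 1) :
    JM (fun x a => ∑ i, (p x a i : ℂ) • G i) := by
  let e := (Fintype.equivFin ι).symm
  refine ⟨Fintype.card ι, G ∘ e, fun x a => p x a ∘ e, ⟨fun _ => hG _, ?_⟩,
    fun x a _ => hp0 x a _, fun x _ => hp1 x _, fun x a => (e.sum_comp _).symm⟩
  rw [← hGsum]
  exact e.sum_comp G

theorem JM.of_isEmpty [IsEmpty (Fin nx)] (M : Fin nx → Fin na → Matrix (Fin d) (Fin d) ℂ) :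
    JM M :=
  ⟨1, fun _ => 1, fun _ _ _ => 0, ⟨fun _ => PosSemidef.one, by simp⟩,
    isEmptyElim, isEmptyElim, isEmptyElim⟩

def sandwich (S : Matrix (Fin d) (Fin d) ℂ) (M : Fin nx → Fin na → Matrix (Fin d) (Fin d) ℂ) :
    Fin nx → Fin na → Matrix (Fin d) (Fin d) ℂ :=
  fun x a => S * M x a * Sᴴ

def mixture (t : ℝ) (M N : Fin nx → Fin na → Matrix (Fin d) (Fin d) ℂ) :
    Fin nx → Fin na → Matrix (Fin d) (Fin d) ℂ :=
  fun x a => (((1 + t : ℝ))⁻¹ : ℂ) • (M x a + (t : ℂ) • N x a)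

theorem sandwich_one (M : Fin nx → Fin na → Matrix (Fin d) (Fin d) ℂ) : sandwich 1 M = M := by
  funext x a
  simp [sandwich]

theorem sandwich_sandwich (S T : Matrix (Fin d) (Fin d) ℂ)
    (M : Fin nx → Fin na → Matrix (Fin d) (Fin d) ℂ) :
    sandwich T (sandwich S M) = sandwich (T * S) M := by
  funext x a
  simp only [sandwich, conjTranspose_mul, Matrix.mul_assoc]

theorem sum_sandwich (S : Matrix (Fin d) (Fin d) ℂ)
    (M : Fin nx → Fin na → Matrix (Fin d) (Fin d) ℂ) (x : Fin nx) :
    ∑ a, sandwich S M x a = S * (∑ a, M x a) * Sᴴ := by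
  simp only [sandwich, Finset.mul_sum, Finset.sum_mul]

theorem sandwich_mixture (S : Matrix (Fin d) (Fin d) ℂ) (t : ℝ)
    (M N : Fin nx → Fin na → Matrix (Fin d) (Fin d) ℂ) :
    sandwich S (mixture t M N) = mixture t (sandwich S M) (sandwich S N) := by
  funext x a
  simp only [sandwich, mixture, mul_smul_comm, smul_mul_assoc, mul_add, add_mul]

theorem sum_mixture {t : ℝ} (ht : 1 + t ≠ 0) {M N : Fin nx → Fin na → Matrix (Fin d) (Fin d) ℂ}
    {x : Fin nx} {R : Matrix (Fin d) (Fin d) ℂ} (hM : ∑ a, M x a = R) (hN : ∑ a, N x a = R) :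
    ∑ a, mixture t M N x a = R := by
  simp only [mixture, ← Finset.smul_sum, Finset.sum_add_distrib, hM, hN]
  have h1t : ((1 + t : ℝ) : ℂ) ≠ 0 := Complex.ofReal_ne_zero.mpr ht
  rw [show R + (t : ℂ) • R = ((1 + t : ℝ) : ℂ) • R by push_cast; rw [add_smul, one_smul],
    smul_smul, inv_mul_cancel₀ h1t, one_smul]

section Sandwich

variable {S : Matrix (Fin d) (Fin d) ℂ}

theorem LHS.sandwich_of_JM (hS : (S * Sᴴ).trace = 1)
    {M : Fin nx → Fin na → Matrix (Fin d) (Fin d) ℂ} (hM : JM M) : LHS (sandwich S M) := by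
  obtain ⟨nl, G, p, ⟨hG, hGsum⟩, hp0, hp1, hMG⟩ := hM
  obtain rfl := funext₂ hMG
  have hdecomp : sandwich S (fun x a => ∑ l, (p x a l : ℂ) • G l) =
      fun x a => ∑ l, (p x a l : ℂ) • (S * G l * Sᴴ) := by
    funext x a
    simp only [sandwich, Finset.mul_sum, Finset.sum_mul, mul_smul_comm, smul_mul_assoc]
  rw [hdecomp]
  refine LHS.of_sum_smul (fun l => (hG l).mul_mul_conjTranspose_same S) ?_ hp0 hp1
  rw [← trace_sum, ← Finset.sum_mul, ← Finset.mul_sum, hGsum, Matrix.mul_one, hS]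

theorem JM.sandwich_of_LHS {A : Fin nx → Fin na → Matrix (Fin d) (Fin d) ℂ} (hA : LHS A)
    (hS : ∀ x, S * (∑ a, A x a) * Sᴴ = 1) : JM (sandwich S A) := by
  rcases isEmpty_or_nonempty (Fin nx) with hnx | ⟨⟨x₀⟩⟩
  · exact JM.of_isEmpty _
  obtain ⟨nl, q, p, ρ, hq0, -, hp0, hp1, hρ, hAρ⟩ := hA
  obtain rfl := funext₂ hAρ
  have hdecomp : sandwich S (fun x a => ∑ l, ((q l * p x a l : ℝ) : ℂ) • ρ l) =
      fun x a => ∑ l, (p x a l : ℂ) • ((q l : ℂ) • (S * ρ l * Sᴴ)) := by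
    funext x a
    simp only [sandwich, Finset.mul_sum, Finset.sum_mul, mul_smul_comm, smul_mul_assoc,
      smul_smul, Complex.ofReal_mul, mul_comm]
  have hreduced : ∑ a, ∑ l, ((q l * p x₀ a l : ℝ) : ℂ) • ρ l = ∑ l, (q l : ℂ) • ρ l := by
    rw [Finset.sum_comm]
    refine Finset.sum_congr rfl fun l _ => ?_
    rw [← Finset.sum_smul, ← Complex.ofReal_sum, ← Finset.mul_sum, hp1, mul_one]
  rw [hdecomp]
  refine JM.of_fintype (fun l => ((hρ l).1.mul_mul_conjTranspose_same S).smul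
    (Complex.zero_le_real.mpr (hq0 l))) ?_ hp0 hp1
  rw [← hS x₀, hreduced]
  simp only [Finset.mul_sum, Finset.sum_mul, mul_smul_comm, smul_mul_assoc]

theorem isSA_sandwich (hS : (S * Sᴴ).trace = 1) {N : Fin nx → Fin na → Matrix (Fin d) (Fin d) ℂ}
    (hN : IsMA N) : IsSA (sandwich S N) :=
  ⟨fun x a => (hN.1 x a).mul_mul_conjTranspose_same S, S * Sᴴ,
    ⟨posSemidef_self_mul_conjTranspose S, hS⟩,
    fun x => by rw [sum_sandwich, hN.2 x, Matrix.mul_one]⟩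

theorem isMA_sandwich {ξ : Fin nx → Fin na → Matrix (Fin d) (Fin d) ℂ}
    (hξ : ∀ x a, (ξ x a).PosSemidef) (hS : ∀ x, S * (∑ a, ξ x a) * Sᴴ = 1) :
    IsMA (sandwich S ξ) :=
  ⟨fun x a => (hξ x a).mul_mul_conjTranspose_same S, fun x => by rw [sum_sandwich, hS x]⟩

end Sandwich

def irjmFeasible (B : Fin nx → Fin na → Matrix (Fin d) (Fin d) ℂ) : Set ℝ :=
  {t | 0 ≤ t ∧ ∃ N, IsMA N ∧ JM N ∧ JM (mixture t B N)}

def srclhsFeasible (σ : Fin nx → Fin na → Matrix (Fin d) (Fin d) ℂ) : Set ℝ :=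
  {t | 0 ≤ t ∧ ∃ ξ, IsSA ξ ∧ LHS ξ ∧ (∀ x, ∑ a, ξ x a = ∑ a, σ x a) ∧ LHS (mixture t σ ξ)}

section Feasible

variable {B : Fin nx → Fin na → Matrix (Fin d) (Fin d) ℂ} {S : Matrix (Fin d) (Fin d) ℂ}

theorem irjmFeasible_subset_srclhsFeasible (hB : IsMA B) (hS : (S * Sᴴ).trace = 1) :
    irjmFeasible B ⊆ srclhsFeasible (sandwich S B) := by
  rintro t ⟨ht, N, hN, hNjm, hmix⟩
  refine ⟨ht, sandwich S N, isSA_sandwich hS hN, LHS.sandwich_of_JM hS hNjm,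
    fun x => by rw [sum_sandwich, sum_sandwich, hN.2, hB.2], ?_⟩
  rw [← sandwich_mixture]
  exact LHS.sandwich_of_JM hS hmix

theorem srclhsFeasible_subset_irjmFeasible (hB : IsMA B) (hS : IsUnit S) :
    srclhsFeasible (sandwich S B) ⊆ irjmFeasible B := by
  rintro t ⟨ht, ξ, hξ, hξlhs, hred, hmix⟩
  have hTS : S⁻¹ * S = 1 := nonsing_inv_mul S ((isUnit_iff_isUnit_det S).mp hS)
  have hB' : sandwich S⁻¹ (sandwich S B) = B := by rw [sandwich_sandwich, hTS, sandwich_one]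
  have hσ : ∀ x, ∑ a, sandwich S B x a = S * Sᴴ := fun x => by
    rw [sum_sandwich, hB.2, Matrix.mul_one]
  have hnormal : S⁻¹ * (S * Sᴴ) * S⁻¹ᴴ = 1 := by
    rw [← Matrix.mul_assoc, hTS, Matrix.one_mul, ← conjTranspose_mul, hTS, conjTranspose_one]
  have hξred : ∀ x, S⁻¹ * (∑ a, ξ x a) * S⁻¹ᴴ = 1 := fun x => by rw [hred, hσ, hnormal]
  refine ⟨ht, sandwich S⁻¹ ξ, isMA_sandwich hξ.1 hξred, JM.sandwich_of_LHS hξlhs hξred, ?_⟩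
  rw [← hB', ← sandwich_mixture]
  refine JM.sandwich_of_LHS hmix fun x => ?_
  rw [sum_mixture (by linarith) (hσ x) ((hred x).trans (hσ x)), hnormal]

theorem srclhs_sandwich_eq_irjm (hB : IsMA B) (hS : IsUnit S) (htr : (S * Sᴴ).trace = 1) :
    SRCLHS (sandwich S B) = IRJM B :=
  congrArg sInf ((srclhsFeasible_subset_irjmFeasible hB hS).antisymm
    (irjmFeasible_subset_srclhsFeasible hB htr))

end Feasible

def uniformNoise (d nx na : ℕ) : Fin nx → Fin na → Matrix (Fin d) (Fin d) ℂ :=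
  fun _ _ => (((na : ℝ)⁻¹ : ℝ) : ℂ) • 1

theorem isMA_uniformNoise (hna : na ≠ 0) : IsMA (uniformNoise d nx na) := by
  refine ⟨fun _ _ => PosSemidef.one.smul (Complex.zero_le_real.mpr (by positivity)), fun x => ?_⟩
  rw [show ∑ a, uniformNoise d nx na x a = ∑ _a : Fin na, (((na : ℝ)⁻¹ : ℝ) : ℂ) • 1 from rfl,
    Finset.sum_const, Finset.card_univ, Fintype.card_fin, ← Nat.cast_smul_eq_nsmul ℂ,
    smul_smul]
  push_cast
  rw [mul_inv_cancel₀ (Nat.cast_ne_zero.mpr hna), one_smul]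

theorem jm_uniformNoise (hna : na ≠ 0) : JM (uniformNoise d nx na) :=
  ⟨1, fun _ => 1, fun _ _ _ => (na : ℝ)⁻¹, ⟨fun _ => PosSemidef.one, by simp⟩,
    fun _ _ _ => by positivity, fun _ _ => by simp [hna], fun _ _ => by simp [uniformNoise]⟩

/-- Response function of the parent measurement of the noisy mixture: having measured `B x'` with
outcome `a'`, setting `x` reports `a'` if `x' = x` and a uniformly random outcome otherwise. -/
def uniformSwitch (x : Fin nx) (a : Fin na) (i : Fin nx × Fin na) : ℝ :=
  if i.1 = x then (if i.2 = a then 1 else 0) else (na : ℝ)⁻¹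

theorem uniformSwitch_nonneg (x : Fin nx) (a : Fin na) (i : Fin nx × Fin na) :
    0 ≤ uniformSwitch x a i := by
  unfold uniformSwitch
  split_ifs <;> positivity

theorem sum_uniformSwitch (hna : na ≠ 0) (x : Fin nx) (i : Fin nx × Fin na) :
    ∑ a, uniformSwitch x a i = 1 := by
  unfold uniformSwitch
  split_ifs
  · simp
  · simp [hna]

theorem sum_uniformSwitch_smul {B : Fin nx → Fin na → Matrix (Fin d) (Fin d) ℂ} (hB : IsMA B)
    (x : Fin nx) (a : Fin na) :
    ∑ i, (uniformSwitch x a i : ℂ) • B i.1 i.2 =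
      B x a + ((((nx : ℝ) - 1) * (na : ℝ)⁻¹ : ℝ) : ℂ) • 1 := by
  have hoff : ∀ x' ∈ ({x}ᶜ : Finset (Fin nx)),
      ∑ a', (uniformSwitch x a (x', a') : ℂ) • B x' a' = (((na : ℝ)⁻¹ : ℝ) : ℂ) • 1 := by
    intro x' hx'
    simp only [uniformSwitch, if_neg (by simpa using hx' : x' ≠ x)]
    rw [← Finset.smul_sum, hB.2]
  rw [Fintype.sum_prod_type, Fintype.sum_eq_add_sum_compl x, Finset.sum_congr rfl hoff,
    Finset.sum_const, Finset.card_compl, Finset.card_singleton, Fintype.card_fin,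
    ← Nat.cast_smul_eq_nsmul ℂ, Nat.cast_sub x.pos, smul_smul]
  simp only [uniformSwitch, if_true, apply_ite Complex.ofReal, ite_smul, Complex.ofReal_one,
    Complex.ofReal_zero, one_smul, zero_smul, Finset.sum_ite_eq', Finset.mem_univ]
  push_cast
  rfl

theorem jm_mixture_uniformNoise {B : Fin nx → Fin na → Matrix (Fin d) (Fin d) ℂ} (hB : IsMA B)
    (hnx : nx ≠ 0) (hna : na ≠ 0) : JM (mixture (nx - 1) B (uniformNoise d nx na)) := by
  set c : ℂ := (((nx : ℝ)⁻¹ : ℝ) : ℂ)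
  have hGsum : ∑ i : Fin nx × Fin na, c • B i.1 i.2 = 1 := by
    simp only [Fintype.sum_prod_type, ← Finset.smul_sum, hB.2, Finset.sum_const,
      Finset.card_univ, Fintype.card_fin, ← Nat.cast_smul_eq_nsmul ℂ, smul_smul, c]
    push_cast
    rw [inv_mul_cancel₀ (Nat.cast_ne_zero.mpr hnx), one_smul]
  have hmix : mixture (nx - 1) B (uniformNoise d nx na) =
      fun x a => ∑ i, (uniformSwitch x a i : ℂ) • c • B i.1 i.2 := by
    funext x a
    simp only [smul_comm _ c, ← Finset.smul_sum, sum_uniformSwitch_smul hB, mixture,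
      uniformNoise, c]
    push_cast
    module
  rw [hmix]
  exact JM.of_fintype (fun i => (hB.1 _ _).smul (Complex.zero_le_real.mpr (by positivity)))
    hGsum uniformSwitch_nonneg (sum_uniformSwitch hna)

theorem irjmFeasible_nonempty {B : Fin nx → Fin na → Matrix (Fin d) (Fin d) ℂ} (hB : IsMA B)
    (hd : d ≠ 0) : (irjmFeasible B).Nonempty := by
  rcases isEmpty_or_nonempty (Fin nx) with hnx | ⟨⟨x₀⟩⟩
  · exact ⟨0, le_rfl, B, hB, JM.of_isEmpty _, JM.of_isEmpty _⟩
  have hnx : nx ≠ 0 := x₀.pos.ne'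
  have hna : na ≠ 0 := by
    rintro rfl
    have : NeZero d := ⟨hd⟩
    simpa using hB.2 x₀
  exact ⟨nx - 1, by simpa using Nat.one_le_iff_ne_zero.mpr hnx, uniformNoise d nx na,
    isMA_uniformNoise hna, jm_uniformNoise hna, jm_mixture_uniformNoise hB hnx hna⟩

theorem srclhs_sandwich_le_irjm {B : Fin nx → Fin na → Matrix (Fin d) (Fin d) ℂ} (hB : IsMA B)
    {S : Matrix (Fin d) (Fin d) ℂ} (hS : (S * Sᴴ).trace = 1) :
    SRCLHS (sandwich S B) ≤ IRJM B := by
  have hd : d ≠ 0 := by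
    rintro rfl
    simp [Matrix.trace] at hS
  exact csInf_le_csInf ⟨0, fun _ ht => ht.1⟩ (irjmFeasible_nonempty hB hd)
    (irjmFeasible_subset_srclhsFeasible hB hS)

theorem sandwich_sqrt {σ : Matrix (Fin d) (Fin d) ℂ} (hσ : σ.PosSemidef)
    (B : Fin nx → Fin na → Matrix (Fin d) (Fin d) ℂ) :
    (fun x a => hσ.sqrt * B x a * hσ.sqrt) = sandwich hσ.sqrt B := by
  unfold sandwich
  rw [hσ.posSemidef_sqrt.1.eq]

/-- SR^{C-LHS}(ρ^{1/2} B ρ^{1/2}) = IR^{JM}(B) for every full-rank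
density matrix ρ; hence the maximum over densities equals IR^{JM}(B). -/
theorem srclhs_eq_irjm {d na nx : ℕ}
    (B : Fin nx → Fin na → Matrix (Fin d) (Fin d) ℂ) (hB : IsMA B)
    (ρ : Matrix (Fin d) (Fin d) ℂ) (hρ : ρ.PosDef) (hρ1 : ρ.trace = 1) :
    SRCLHS (fun x a => hρ.posSemidef.sqrt * B x a * hρ.posSemidef.sqrt) = IRJM B ∧
    sSup {s : ℝ | ∃ (σ : Matrix (Fin d) (Fin d) ℂ) (hσ : σ.PosSemidef),
        σ.trace = 1 ∧ s = SRCLHS (fun x a => hσ.sqrt * B x a * hσ.sqrt)} = IRJM B := by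
  have heq : SRCLHS (fun x a => hρ.posSemidef.sqrt * B x a * hρ.posSemidef.sqrt) = IRJM B := by
    rw [sandwich_sqrt]
    exact srclhs_sandwich_eq_irjm hB hρ.isUnit_sqrt
      (by rw [hρ.posSemidef.sqrt_mul_conjTranspose_sqrt, hρ1])
  refine ⟨heq, IsGreatest.csSup_eq ⟨⟨ρ, hρ.posSemidef, hρ1, heq.symm⟩, ?_⟩⟩
  rintro s ⟨σ, hσ, hσ1, rfl⟩
  rw [sandwich_sqrt]
  exact srclhs_sandwich_le_irjm hB (by rw [hσ.sqrt_mul_conjTranspose_sqrt, hσ1])
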